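/- arXiv:2012.05326 — 2 statements merged into one kernel-verified Lean document; each statement's English description precedes it below -/
import Mathlib

section
/- For every real ε with 0 < ε ≤ 1 and all integers n, m with n ≥ 2 and 1 ≤ m ≤ n, the following inequality holds: ln(1 + (1 − (1 − 1/n)^m)·(e^{ε/√m} − 1)) ≤ 3√m·ε/n ≤ 3ε/√n. -/
lemma exp_sub_one_le_three_mul {x : ℝ} (hx0 : 0 ≤ x) (hx1 : x ≤ 1) :
    Real.exp x - 1 ≤ 3 * x := by
  have h1 : 1 - x ≤ Real.exp (-x) := by linarith [Real.add_one_le_exp (-x)]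
  have h2 : Real.exp x * Real.exp (-x) = 1 := by
    rw [← Real.exp_add]; simp
  have h3 : Real.exp x ≤ Real.exp 1 := Real.exp_le_exp.mpr hx1
  have h4 : Real.exp 1 < 3 := by linarith [Real.exp_one_lt_d9]
  nlinarith [Real.exp_pos x, Real.exp_pos (-x)]

/-- For every real `ε` with `0 < ε ≤ 1` and all integers `n, m` with
`n ≥ 2` and `1 ≤ m ≤ n`, the privacy loss of a single cycle of length `m` satisfies
`ln(1 + (1 − (1 − 1/n)^m)·(e^{ε/√m} − 1)) ≤ 3√m·ε/n ≤ 3ε/√n`. -/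
theorem cycle_privacy_loss_bound (ε : ℝ) (hε0 : 0 < ε) (hε1 : ε ≤ 1)
    (n m : ℕ) (hn : 2 ≤ n) (hm1 : 1 ≤ m) (hmn : m ≤ n) :
    Real.log (1 + (1 - (1 - 1 / (n : ℝ)) ^ m) * (Real.exp (ε / Real.sqrt m) - 1))
      ≤ 3 * Real.sqrt m * ε / n ∧
    3 * Real.sqrt m * ε / n ≤ 3 * ε / Real.sqrt n := by
  have hN2 : (2:ℝ) ≤ (n:ℝ) := by exact_mod_cast hn
  have hN0 : (0:ℝ) < (n:ℝ) := by linarith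
  have hM1 : (1:ℝ) ≤ (m:ℝ) := by exact_mod_cast hm1
  have hMN : (m:ℝ) ≤ (n:ℝ) := by exact_mod_cast hmn
  set s := Real.sqrt m with hs
  have hs1 : 1 ≤ s := by
    rw [hs, show (1:ℝ) = Real.sqrt 1 by simp]
    exact Real.sqrt_le_sqrt hM1
  have hs0 : 0 < s := by linarith
  have hss : s * s = (m:ℝ) := Real.mul_self_sqrt (by linarith)
  -- bounds on A := 1 - (1-1/n)^m
  have hinv : (0:ℝ) ≤ 1 - 1/(n:ℝ) := by
    have : 1/(n:ℝ) ≤ 1 := by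
      rw [div_le_one hN0]; linarith
    linarith
  have hpow_le : (1 - 1/(n:ℝ))^m ≤ 1 :=
    pow_le_one₀ hinv (by
      have : 0 < 1/(n:ℝ) := by positivity
      linarith)
  have hA0 : (0:ℝ) ≤ 1 - (1 - 1/(n:ℝ))^m := by linarith
  have hbern : 1 - (m:ℝ)/(n:ℝ) ≤ (1 - 1/(n:ℝ))^m := by
    have h := one_add_mul_le_pow (a := -(1/(n:ℝ))) (by
      have : 0 < 1/(n:ℝ) := by positivity
      linarith) m
    have : 1 + (m:ℝ) * (-(1/(n:ℝ))) ≤ (1 + -(1/(n:ℝ)))^m := h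
    calc 1 - (m:ℝ)/(n:ℝ) = 1 + (m:ℝ) * (-(1/(n:ℝ))) := by ring
      _ ≤ (1 + -(1/(n:ℝ)))^m := this
      _ = (1 - 1/(n:ℝ))^m := by ring_nf
  have hA_le : 1 - (1 - 1/(n:ℝ))^m ≤ (m:ℝ)/(n:ℝ) := by linarith
  -- bounds on B := exp(ε/s) - 1
  have hx0 : 0 ≤ ε / s := by positivity
  have hx1 : ε / s ≤ 1 := by
    rw [div_le_one hs0]; linarith
  have hB0 : 0 ≤ Real.exp (ε / s) - 1 := by
    have := Real.one_le_exp hx0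
    linarith
  have hB_le : Real.exp (ε / s) - 1 ≤ 3 * (ε / s) := exp_sub_one_le_three_mul hx0 hx1
  -- product bound
  have hprod : (1 - (1 - 1/(n:ℝ))^m) * (Real.exp (ε / s) - 1) ≤ 3 * s * ε / (n:ℝ) := by
    have h1 : (1 - (1 - 1/(n:ℝ))^m) * (Real.exp (ε / s) - 1)
        ≤ ((m:ℝ)/(n:ℝ)) * (3 * (ε / s)) :=
      mul_le_mul hA_le hB_le hB0 (by positivity)
    have h2 : ((m:ℝ)/(n:ℝ)) * (3 * (ε / s)) = 3 * s * ε / (n:ℝ) := by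
      rw [← hss]; field_simp
    linarith [h1, h2.le, h2.ge]
  have hprod0 : 0 ≤ (1 - (1 - 1/(n:ℝ))^m) * (Real.exp (ε / s) - 1) := mul_nonneg hA0 hB0
  constructor
  · have hlog : Real.log (1 + (1 - (1 - 1/(n:ℝ))^m) * (Real.exp (ε / s) - 1))
        ≤ (1 - (1 - 1/(n:ℝ))^m) * (Real.exp (ε / s) - 1) := by
      have := Real.log_le_sub_one_of_pos (x := 1 + (1 - (1 - 1/(n:ℝ))^m) * (Real.exp (ε / s) - 1))
        (by linarith)
      linarith
    linarith
  · have hsn : s ≤ Real.sqrt n := Real.sqrt_le_sqrt hMN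
    have hrn0 : 0 < Real.sqrt n := Real.sqrt_pos.mpr hN0
    have hrr : Real.sqrt n * Real.sqrt n = (n:ℝ) := Real.mul_self_sqrt (by linarith)
    rw [div_le_div_iff₀ hN0 hrn0]
    have hkey : s * Real.sqrt n ≤ Real.sqrt n * Real.sqrt n :=
      mul_le_mul_of_nonneg_right hsn hrn0.le
    nlinarith [hkey, hε0]
end

section
/- For every real ε₀ with 0 < ε₀ ≤ 1, every δ ∈ (0,1), and every integer n with n ≥ 14²·ln(4/δ), the following inequality holds: ln(1 + ((e^{ε₀} − 1)/(e^{ε₀} + 1))·(8·√(e^{ε₀}·ln(4/δ)/n) + 8·e^{ε₀}/n)) ≤ 14·ε₀·√(ln(4/δ)/n). -/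
set_option maxHeartbeats 1000000


/-- Simplified closed form of the amplification-by-shuffling bound of
Feldman, McMillan and Talwar: for `0 < ε₀ ≤ 1`, `δ ∈ (0,1)` and an integer
`n ≥ 14²·ln(4/δ)`,
`ln(1 + ((e^{ε₀} − 1)/(e^{ε₀} + 1))·(8√(e^{ε₀}·ln(4/δ)/n) + 8e^{ε₀}/n))
  ≤ 14·ε₀·√(ln(4/δ)/n)`. -/
theorem shuffling_simplified_bound (ε₀ δ : ℝ) (hε0 : 0 < ε₀) (hε1 : ε₀ ≤ 1)
    (hδ0 : 0 < δ) (hδ1 : δ < 1) (n : ℕ)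
    (hn : (14 : ℝ) ^ 2 * Real.log (4 / δ) ≤ n) :
    Real.log (1 + (Real.exp ε₀ - 1) / (Real.exp ε₀ + 1) *
        (8 * Real.sqrt (Real.exp ε₀ * Real.log (4 / δ) / n) + 8 * Real.exp ε₀ / n))
      ≤ 14 * ε₀ * Real.sqrt (Real.log (4 / δ) / n) := by
  set E := Real.exp ε₀ with hEdef
  set L := Real.log (4 / δ) with hLdef
  have hE0 : 0 < E := Real.exp_pos _
  have hE1 : 1 < E := by
    have := Real.add_one_le_exp ε₀
    linarith
  have hEe : E < 2.7182818286 := by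
    have h1 : E ≤ Real.exp 1 := Real.exp_le_exp.mpr hε1
    have h2 := Real.exp_one_lt_d9
    linarith
  -- L ≥ 1
  have h4δ : Real.exp 1 ≤ 4 / δ := by
    have h2 := Real.exp_one_lt_d9
    have : (4:ℝ) ≤ 4 / δ := by
      rw [le_div_iff₀ hδ0]; nlinarith
    linarith [h2]
  have hL1 : 1 ≤ L := by
    calc (1:ℝ) = Real.log (Real.exp 1) := (Real.log_exp 1).symm
    _ ≤ L := Real.log_le_log (Real.exp_pos 1) h4δ
  have hn0 : (0:ℝ) < n := by nlinarith
  set s := Real.sqrt (L / n) with hsdef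
  have hs0 : 0 ≤ s := Real.sqrt_nonneg _
  have hs2 : s ^ 2 = L / n := Real.sq_sqrt (by positivity)
  have hs196 : s ^ 2 ≤ 1 / 196 := by
    rw [hs2, div_le_div_iff₀ hn0 (by norm_num)]
    nlinarith
  have hs14 : s ≤ 1 / 14 := by nlinarith
  have hsqE : Real.sqrt (E * L / n) = Real.sqrt E * s := by
    rw [mul_div_assoc, Real.sqrt_mul hE0.le]
  have hsE : Real.sqrt E ≤ 1.65 := by
    nlinarith [Real.sq_sqrt hE0.le, Real.sqrt_nonneg E]
  have hsE0 : 0 ≤ Real.sqrt E := Real.sqrt_nonneg E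
  have h1n : (1:ℝ) / n ≤ s ^ 2 := by
    rw [hs2, div_le_div_iff₀ hn0 hn0]
    nlinarith
  -- c bound
  have hkey : E - 1 ≤ ε₀ * E := by
    have h := Real.add_one_le_exp (-ε₀)
    rw [Real.exp_neg] at h
    have : (1 - ε₀) * E ≤ 1 := by
      rw [← hEdef] at h
      calc (1 - ε₀) * E ≤ E⁻¹ * E := by nlinarith
      _ = 1 := inv_mul_cancel₀ hE0.ne'
    linarith
  have hc : (E - 1) / (E + 1) ≤ 0.74 * ε₀ := by
    rw [div_le_iff₀ (by linarith)]
    nlinarith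
  have hc0 : 0 ≤ (E - 1) / (E + 1) := div_nonneg (by linarith) (by linarith)
  -- bound T
  have hEn : 8 * E / n ≤ 8 * E * s ^ 2 := by
    have heq : 8 * E / n = 8 * E * (1 / n) := by ring
    rw [heq]
    have := mul_le_mul_of_nonneg_left h1n (by positivity : (0:ℝ) ≤ 8 * E)
    linarith
  have hss : s ^ 2 ≤ s / 14 := by
    have h := mul_le_mul_of_nonneg_right hs14 hs0
    rw [sq]; linarith
  have hbr : 8 * Real.sqrt (E * L / n) + 8 * E / n ≤ 14.8 * s := by
    rw [hsqE]
    have h1 : 8 * (Real.sqrt E * s) ≤ 13.2 * s := by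
      nlinarith [mul_le_mul_of_nonneg_right hsE hs0]
    have h2a : 8 * E * s ^ 2 ≤ 8 * 2.7182818286 * s ^ 2 := by
      nlinarith [sq_nonneg s]
    have h2b : 8 * 2.7182818286 * s ^ 2 ≤ 8 * 2.7182818286 * (s / 14) := by
      nlinarith [hss]
    have h2c : 8 * 2.7182818286 * (s / 14) ≤ 1.6 * s := by nlinarith [hs0]
    linarith
  have hbr0 : 0 ≤ 8 * Real.sqrt (E * L / n) + 8 * E / n := by positivity
  have hT : (E - 1) / (E + 1) * (8 * Real.sqrt (E * L / n) + 8 * E / n)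
      ≤ 14 * ε₀ * s := by
    calc (E - 1) / (E + 1) * (8 * Real.sqrt (E * L / n) + 8 * E / n)
        ≤ 0.74 * ε₀ * (14.8 * s) := by
          apply mul_le_mul hc hbr hbr0 (by positivity)
    _ ≤ 14 * ε₀ * s := by nlinarith [mul_nonneg hε0.le hs0]
  have hT0 : 0 ≤ (E - 1) / (E + 1) * (8 * Real.sqrt (E * L / n) + 8 * E / n) :=
    mul_nonneg hc0 hbr0
  have hlog : Real.log (1 + (E - 1) / (E + 1) * (8 * Real.sqrt (E * L / n) + 8 * E / n))
      ≤ (E - 1) / (E + 1) * (8 * Real.sqrt (E * L / n) + 8 * E / n) := by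
    have := Real.log_le_sub_one_of_pos (x := 1 + (E - 1) / (E + 1) *
      (8 * Real.sqrt (E * L / n) + 8 * E / n)) (by linarith)
    linarith
  linarith
end
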